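/- arXiv:2507.09670 — 2 statements merged into one kernel-verified Lean document; each statement's English description precedes it below -/
import Mathlib

section
/- A Tychonoff space X is an Ascoli space if, and only if, each point x ∈ X is contained in a dense subspace B_x of X which is an Ascoli space with the subspace topology. -/
open Set Filter Topology

/-- A set `H` of continuous real-valued functions is equicontinuous. -/
def EquicontinuousSet {X : Type*} [TopologicalSpace X] (H : Set C(X, ℝ)) : Prop :=
  ∀ x : X, ∀ ε : ℝ, 0 < ε → ∃ U ∈ 𝓝 x, ∀ x' ∈ U, ∀ f ∈ H, |f x' - f x| < ε

/-- `X` is Ascoli: every compact subset of `C_k(X)` is equicontinuous. -/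
def AscoliSpace (X : Type*) [TopologicalSpace X] : Prop :=
  ∀ K : Set C(X, ℝ), IsCompact K → EquicontinuousSet K

/-- `X` is sequentially Ascoli: every convergent sequence in `C_k(X)` is equicontinuous. -/
def SeqAscoliSpace (X : Type*) [TopologicalSpace X] : Prop :=
  ∀ (f : ℕ → C(X, ℝ)) (g : C(X, ℝ)), Tendsto f atTop (𝓝 g) →
    EquicontinuousSet (Set.range f ∪ {g})

/-- A function is `k`-continuous if its restriction to every compact subset is continuous. -/
def KContinuous {X Y : Type*} [TopologicalSpace X] [TopologicalSpace Y] (f : X → Y) : Prop :=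
  ∀ K : Set X, IsCompact K → ContinuousOn f K

/-- `X` is a `k_ℝ`-space if every `k`-continuous real-valued function is continuous. -/
def KRSpace (X : Type*) [TopologicalSpace X] : Prop :=
  ∀ f : X → ℝ, KContinuous f → Continuous f

/-- `X` is an `s_ℝ`-space if every sequentially continuous real-valued function is continuous. -/
def SRSpace (X : Type*) [TopologicalSpace X] : Prop :=
  ∀ f : X → ℝ, SeqContinuous f → Continuous f

/-- A function on a product is separately continuous. -/
def SeparatelyContinuous {X K : Type*} [TopologicalSpace X] [TopologicalSpace K]
    (Φ : X × K → ℝ) : Prop :=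
  (∀ x : X, Continuous fun k => Φ (x, k)) ∧ (∀ k : K, Continuous fun x => Φ (x, k))

/-- `X` is pseudocompact: every continuous real-valued function on `X` is bounded. -/
def Pseudocompact (X : Type*) [TopologicalSpace X] : Prop :=
  ∀ f : X → ℝ, Continuous f → ∃ M : ℝ, ∀ x : X, |f x| ≤ M

/-- A subset `A` of `X` is functionally bounded if every continuous real-valued
function on `X` is bounded on `A`. -/
def FunctionallyBounded {X : Type*} [TopologicalSpace X] (A : Set X) : Prop :=
  ∀ f : X → ℝ, Continuous f → ∃ M : ℝ, ∀ a ∈ A, |f a| ≤ M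

/-- An `R`-quotient map: a continuous surjection such that real-valued functions on the
codomain are continuous as soon as their composition with the map is continuous. -/
def RQuotientMap {X Y : Type*} [TopologicalSpace X] [TopologicalSpace Y] (p : X → Y) : Prop :=
  Continuous p ∧ Function.Surjective p ∧ ∀ φ : Y → ℝ, Continuous (φ ∘ p) → Continuous φ

def EquicontinuousSetAt {X : Type*} [TopologicalSpace X] (H : Set C(X, ℝ)) (x : X) : Prop :=
  ∀ ε : ℝ, 0 < ε → ∃ U ∈ 𝓝 x, ∀ x' ∈ U, ∀ f ∈ H, |f x' - f x| < ε

/-- The bound `|f - f x| ≤ ε / 2` is a closed condition, so it passes from `V ∩ B` to its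
closure, which contains the open set `V` when `B` is dense. -/
theorem EquicontinuousSetAt.of_restrict_of_dense {X : Type*} [TopologicalSpace X]
    {H : Set C(X, ℝ)} {B : Set X} (hB : Dense B) {x : X} (hx : x ∈ B)
    (h : EquicontinuousSetAt ((ContinuousMap.restrict B) '' H) ⟨x, hx⟩) :
    EquicontinuousSetAt H x := by
  intro ε hε
  obtain ⟨U, hU, hUε⟩ := h (ε / 2) (half_pos hε)
  obtain ⟨W, hW, hWU⟩ := mem_nhds_induced _ _ _ |>.mp hU
  obtain ⟨V, hVW, hVo, hxV⟩ := mem_nhds_iff.mp hW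
  refine ⟨V, hVo.mem_nhds hxV, fun x' hx' f hf => ?_⟩
  have hVB : V ∩ B ⊆ {y | |f y - f x| ≤ ε / 2} := fun b ⟨hbV, hbB⟩ =>
    (hUε ⟨b, hbB⟩ (hWU (hVW hbV)) _ ⟨f, hf, rfl⟩).le
  have hclosed : IsClosed {y | |f y - f x| ≤ ε / 2} :=
    isClosed_le (by fun_prop) continuous_const
  have hx'ε : |f x' - f x| ≤ ε / 2 :=
    hclosed.closure_subset_iff.mpr hVB (hB.open_subset_closure_inter hVo hx')
  linarith

theorem AscoliSpace.of_homeomorph {X Y : Type*} [TopologicalSpace X] [TopologicalSpace Y]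
    (e : X ≃ₜ Y) (hX : AscoliSpace X) : AscoliSpace Y := by
  intro K hK y ε hε
  obtain ⟨U, hU, hUε⟩ := hX _ (hK.image (ContinuousMap.continuous_precomp (e : C(X, Y))))
    (e.symm y) ε hε
  refine ⟨e.symm ⁻¹' U, e.symm.continuous.continuousAt.preimage_mem_nhds hU,
    fun y' hy' f hf => ?_⟩
  simpa using hUε (e.symm y') hy' _ ⟨f, hf, rfl⟩

theorem ascoli_iff_dense_ascoli_subspaces_general {X : Type*} [TopologicalSpace X] :
    AscoliSpace X ↔ ∀ x : X, ∃ B : Set X, x ∈ B ∧ Dense B ∧ AscoliSpace ↥B := by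
  constructor
  · intro hX x
    exact ⟨univ, mem_univ x, dense_univ, hX.of_homeomorph (Homeomorph.Set.univ X).symm⟩
  · intro h K hK x
    obtain ⟨B, hxB, hB, hBAscoli⟩ := h x
    exact EquicontinuousSetAt.of_restrict_of_dense hB hxB
      (hBAscoli _ (hK.image (ContinuousMap.continuous_restrict B)) ⟨x, hxB⟩)

theorem ascoli_iff_dense_ascoli_subspaces {X : Type*} [TopologicalSpace X] [T35Space X] :
    AscoliSpace X ↔ ∀ x : X, ∃ B : Set X, x ∈ B ∧ Dense B ∧ AscoliSpace ↥B :=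
  ascoli_iff_dense_ascoli_subspaces_general
end

section
/- For a Tychonoff space X the following are equivalent: (i) X is an s_ℝ-space; (ii) for every locally compact sequential Tychonoff space K the product X × K is an s_ℝ-space; (iii) for every locally compact sequential Tychonoff space K, each sequentially continuous function f : X × K → ℝ is continuous. -/
open Set Filter Topology

/-!
If `xₙ → x` in `X`, sequential continuity of `f : X × K → ℝ` together with sequential compactness
of the compact subsets of `K` makes `f (xₙ, ·) → f (x, ·)` uniformly on compacta, so
`x ↦ f (x, ·)` is sequentially continuous into `C(K, ℝ)`. Restricted to a compact `C ⊆ K` this map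
lands in the metric space `C(C, ℝ)`, and in an `s_ℝ`-space sequentially continuous maps into metric
spaces are continuous. Hence `x ↦ f (x, ·)` is continuous for the compact-open topology, and `f`,
its uncurried form, is continuous because `K` is locally compact.
-/

section SequentialCompactness

variable {K : Type*} [TopologicalSpace K] [SequentialSpace K]

theorem IsClosed.sequentialSpace {C : Set K} (hC : IsClosed C) : SequentialSpace C := by
  refine ⟨fun s hs => ?_⟩
  rw [hC.isClosedEmbedding_subtypeVal.isClosed_iff_image_isClosed]
  refine IsSeqClosed.isClosed fun {u p} hu hup => ?_
  choose c hcs hcu using hu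
  have hpC : p ∈ C := hC.isSeqClosed (fun n => hcu n ▸ (c n).2) hup
  refine ⟨⟨p, hpC⟩, hs hcs ?_, rfl⟩
  rw [tendsto_subtype_rng]
  simpa only [hcu] using hup

theorem IsCompact.isSeqCompact_of_sequentialSpace [T2Space K] {C : Set K} (hC : IsCompact C) :
    IsSeqCompact C := by
  have := hC.isClosed.sequentialSpace
  have := isCompact_iff_compactSpace.mp hC
  exact isSeqCompact_iff_seqCompactSpace.mpr inferInstance

end SequentialCompactness

theorem SeqContinuous.tendstoUniformlyOn_of_isSeqCompact {X K M : Type*} [TopologicalSpace X]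
    [TopologicalSpace K] [PseudoMetricSpace M] {f : X × K → M} (hf : SeqContinuous f)
    {C : Set K} (hC : IsSeqCompact C) {x : ℕ → X} {a : X} (hx : Tendsto x atTop (𝓝 a)) :
    TendstoUniformlyOn (fun n k => f (x n, k)) (fun k => f (a, k)) atTop C := by
  rw [Metric.tendstoUniformlyOn_iff]
  by_contra! hbad
  obtain ⟨ε, hε, hfreq⟩ := hbad
  obtain ⟨φ, hφ, hφbad⟩ := extraction_of_frequently_atTop hfreq
  choose k hkC hk using hφbad
  obtain ⟨b, -, ψ, hψ, hkb⟩ := hC hkC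
  have hxψ : Tendsto (fun i => x (φ (ψ i))) atTop (𝓝 a) := hx.comp (hφ.comp hψ).tendsto_atTop
  have hdist : Tendsto (fun i => dist (f (a, k (ψ i))) (f (x (φ (ψ i)), k (ψ i)))) atTop (𝓝 0) := by
    simpa only [dist_self, Function.comp_def] using
      (hf ((tendsto_const_nhds (x := a)).prodMk_nhds hkb)).dist (hf (hxψ.prodMk_nhds hkb))
  exact hε.not_ge (ge_of_tendsto hdist (Eventually.of_forall fun i => hk (ψ i)))

theorem SRSpace.continuous_of_seqContinuous {X M : Type*} [TopologicalSpace X]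
    [PseudoMetricSpace M] (hX : SRSpace X) {F : X → M} (hF : SeqContinuous F) : Continuous F := by
  refine continuous_iff_continuousAt.mpr fun x₀ => ?_
  have hdist : Continuous fun x => dist (F x) (F x₀) :=
    hX _ fun _ _ hu => (hF hu).dist tendsto_const_nhds
  rw [ContinuousAt, tendsto_iff_dist_tendsto_zero]
  simpa only [dist_self] using hdist.tendsto x₀

theorem SRSpace.continuous_of_seqContinuous_compactOpen {X K M : Type*} [TopologicalSpace X]
    [TopologicalSpace K] [PseudoMetricSpace M] (hX : SRSpace X) {Φ : X → C(K, M)}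
    (hΦ : SeqContinuous Φ) : Continuous Φ := by
  refine continuous_iff_continuousAt.mpr fun x₀ => ?_
  rw [ContinuousAt, ContinuousMap.tendsto_compactOpen_iff_forall]
  intro C hC
  have := isCompact_iff_compactSpace.mp hC
  refine (hX.continuous_of_seqContinuous (F := fun x => (Φ x).restrict C) ?_).tendsto x₀
  exact fun _ _ hu => ContinuousMap.tendsto_compactOpen_restrict (hΦ hu) C

theorem SRSpace.prod {X K : Type*} [TopologicalSpace X] [TopologicalSpace K] [T2Space K]
    [LocallyCompactSpace K] [SequentialSpace K] (hX : SRSpace X) : SRSpace (X × K) := by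
  intro f hf
  have hsection (x : X) : Continuous fun k => f (x, k) :=
    SeqContinuous.continuous fun _ _ hu => hf (tendsto_const_nhds.prodMk_nhds hu)
  let Φ : X → C(K, ℝ) := fun x => ⟨fun k => f (x, k), hsection x⟩
  have hΦ : SeqContinuous Φ := fun _ _ hu =>
    ContinuousMap.tendsto_iff_forall_isCompact_tendstoUniformlyOn.mpr fun _ hC =>
      hf.tendstoUniformlyOn_of_isSeqCompact hC.isSeqCompact_of_sequentialSpace hu
  exact continuous_eval.comp ((hX.continuous_of_seqContinuous_compactOpen hΦ).prodMap
    continuous_id)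

theorem SRSpace.of_prod {X K : Type*} [TopologicalSpace X] [TopologicalSpace K] [Nonempty K]
    (h : SRSpace (X × K)) : SRSpace X := by
  intro f hf
  obtain ⟨k⟩ := ‹Nonempty K›
  have hfst : Continuous fun p : X × K => f p.1 := h _ fun _ _ hu => hf hu.fst_nhds
  exact hfst.comp (Continuous.prodMk_left k)

theorem sRSpace_iff_prod_locallyCompact_sequential_general
    {X : Type u} [TopologicalSpace X] :
    (SRSpace X ↔
      ∀ (K : Type v) [TopologicalSpace K] [T35Space K] [LocallyCompactSpace K]
        [SequentialSpace K], SRSpace (X × K)) ∧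
    (SRSpace X ↔
      ∀ (K : Type v) [TopologicalSpace K] [T35Space K] [LocallyCompactSpace K]
        [SequentialSpace K], ∀ f : X × K → ℝ, SeqContinuous f → Continuous f) := by
  have hprod : SRSpace X ↔ ∀ (K : Type v) [TopologicalSpace K] [T35Space K]
      [LocallyCompactSpace K] [SequentialSpace K], SRSpace (X × K) :=
    ⟨fun hX _ _ _ _ _ => hX.prod, fun h => (h PUnit).of_prod⟩
  -- the second equivalence is the first with `SRSpace (X × K)` unfolded
  exact ⟨hprod, hprod⟩

theorem sRSpace_iff_prod_locallyCompact_sequential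
    {X : Type u} [TopologicalSpace X] [T35Space X] :
    (SRSpace X ↔
      ∀ (K : Type v) [TopologicalSpace K] [T35Space K] [LocallyCompactSpace K]
        [SequentialSpace K], SRSpace (X × K)) ∧
    (SRSpace X ↔
      ∀ (K : Type v) [TopologicalSpace K] [T35Space K] [LocallyCompactSpace K]
        [SequentialSpace K], ∀ f : X × K → ℝ, SeqContinuous f → Continuous f) :=
  sRSpace_iff_prod_locallyCompact_sequential_general
end
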